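/- If a QMA verifier accepts input x with some p(n)-qubit proof state ρ with probability at least a, then when the proof is replaced by the totally mixed state on p(n) qubits, the verifier accepts x with probability at least a·2^{-p(n)}. Consequently, acceptance probabilities a ≥ 1 - 2^{-(p+2)} on yes-instances and b ≤ 2^{-(p+2)} on no-instances yield, with totally mixed proof, acceptance probability at least 2^{-(p+1)} on yes-instances and at most 2^{-(p+2)} on no-instances. -/

import Mathlib

/-!
A density matrix `ρ` has nonnegative eigenvalues summing to `1`, so `ρ ≤ 1`; hence
`Tr (Q ρ) ≤ Tr Q` for every `Q ≥ 0`, because `A ↦ Tr (Q A)` is monotone. The totally mixed state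
`2⁻ᵖ • 1` is accepted with probability exactly `2⁻ᵖ Tr Q`, which gives the first two claims; the
third is the soundness bound applied to the totally mixed state itself.
-/

open Matrix
open scoped ComplexOrder

namespace Matrix

variable {n 𝕜 : Type*} [Fintype n] [RCLike 𝕜]

theorem PosSemidef.posSemidef_trace_smul_one_sub [DecidableEq n] {B : Matrix n n 𝕜}
    (hB : B.PosSemidef) : (B.trace • 1 - B).PosSemidef := by
  have hB' := hB.isHermitian
  have hdecomp : B.trace • 1 - B =
      hB'.eigenvectorUnitary * diagonal (fun i ↦ B.trace - hB'.eigenvalues i) *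
        star (hB'.eigenvectorUnitary : Matrix n n 𝕜) := by
    rw [← diagonal_sub, ← smul_one_eq_diagonal, Matrix.mul_sub, Matrix.sub_mul, Matrix.mul_smul,
      Matrix.smul_mul, Matrix.mul_one, Unitary.mul_star_self_of_mem hB'.eigenvectorUnitary.2]
    congr 1
    exact hB'.spectral_theorem.trans (Unitary.conjStarAlgAut_apply ..)
  rw [hdecomp, Unitary.isUnit_coe.posSemidef_star_right_conjugate_iff, posSemidef_diagonal_iff]
  intro i
  rw [hB'.trace_eq_sum_eigenvalues, sub_nonneg, ← RCLike.ofReal_sum, RCLike.ofReal_le_ofReal]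
  exact Finset.single_le_sum (fun j _ ↦ hB.eigenvalues_nonneg j) (Finset.mem_univ i)

open scoped MatrixOrder in
theorem PosSemidef.trace_mul_nonneg {A B : Matrix n n 𝕜} (hA : A.PosSemidef)
    (hB : B.PosSemidef) : 0 ≤ (A * B).trace := by
  classical
  obtain ⟨C, rfl⟩ := CStarAlgebra.nonneg_iff_eq_star_mul_self.mp hA.nonneg
  rw [Matrix.mul_assoc, trace_mul_comm, star_eq_conjTranspose]
  exact (hB.mul_mul_conjTranspose_same C).trace_nonneg

theorem PosSemidef.trace_mul_le_trace_mul_trace [DecidableEq n] {A B : Matrix n n 𝕜}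
    (hA : A.PosSemidef) (hB : B.PosSemidef) : (A * B).trace ≤ A.trace * B.trace := by
  have h := hA.trace_mul_nonneg hB.posSemidef_trace_smul_one_sub
  rwa [Matrix.mul_sub, trace_sub, Matrix.mul_smul, Matrix.mul_one, trace_smul, smul_eq_mul,
    sub_nonneg, mul_comm] at h

theorem PosSemidef.re_trace_mul_le_of_trace_eq_one [DecidableEq n] {Q ρ : Matrix n n ℂ}
    (hQ : Q.PosSemidef) (hρ : ρ.PosSemidef) (hρ_trace : ρ.trace = 1) :
    (Q * ρ).trace.re ≤ Q.trace.re := by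
  simpa [hρ_trace] using (Complex.le_def.mp (hQ.trace_mul_le_trace_mul_trace hρ)).1

end Matrix

theorem inv_two_pow_succ_le_one_sub_mul_inv_two_pow (p : ℕ) :
    ((2 : ℝ) ^ (p + 1))⁻¹ ≤ (1 - ((2 : ℝ) ^ (p + 2))⁻¹) * ((2 : ℝ) ^ p)⁻¹ := by
  have hx : 0 < ((2 : ℝ) ^ p)⁻¹ := by positivity
  have hx1 : ((2 : ℝ) ^ p)⁻¹ ≤ 1 := inv_le_one_of_one_le₀ (one_le_pow₀ one_le_two)
  rw [pow_succ, pow_succ, pow_succ, mul_inv, mul_inv, mul_inv]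
  nlinarith

theorem totally_mixed_proof_general (p : ℕ)
    (Q : Matrix (Fin (2 ^ p)) (Fin (2 ^ p)) ℂ)
    (hQ : Q.PosSemidef) :
    (∀ (ρ : Matrix (Fin (2 ^ p)) (Fin (2 ^ p)) ℂ), ρ.PosSemidef → ρ.trace = 1 →
      ∀ a : ℝ, a ≤ (Q * ρ).trace.re →
        a * ((2 : ℝ) ^ p)⁻¹ ≤
          (Q * (((2 : ℝ) ^ p : ℂ)⁻¹ • (1 : Matrix (Fin (2 ^ p)) (Fin (2 ^ p)) ℂ))).trace.re) ∧
    ((∃ ρ : Matrix (Fin (2 ^ p)) (Fin (2 ^ p)) ℂ, ρ.PosSemidef ∧ ρ.trace = 1 ∧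
        1 - ((2 : ℝ) ^ (p + 2))⁻¹ ≤ (Q * ρ).trace.re) →
      ((2 : ℝ) ^ (p + 1))⁻¹ ≤
        (Q * (((2 : ℝ) ^ p : ℂ)⁻¹ • (1 : Matrix (Fin (2 ^ p)) (Fin (2 ^ p)) ℂ))).trace.re) ∧
    ((∀ ρ : Matrix (Fin (2 ^ p)) (Fin (2 ^ p)) ℂ, ρ.PosSemidef → ρ.trace = 1 →
        (Q * ρ).trace.re ≤ ((2 : ℝ) ^ (p + 2))⁻¹) →
      (Q * (((2 : ℝ) ^ p : ℂ)⁻¹ • (1 : Matrix (Fin (2 ^ p)) (Fin (2 ^ p)) ℂ))).trace.re ≤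
        ((2 : ℝ) ^ (p + 2))⁻¹) := by
  have hcoeff : ((2 : ℝ) ^ p : ℂ)⁻¹ = (((2 : ℝ) ^ p)⁻¹ : ℝ) := by push_cast; rfl
  set σ : Matrix (Fin (2 ^ p)) (Fin (2 ^ p)) ℂ := ((2 : ℝ) ^ p : ℂ)⁻¹ • 1
  have hσ : σ.PosSemidef :=
    PosSemidef.one.smul (by rw [hcoeff]; exact Complex.zero_le_real.mpr (by positivity))
  have hσ_trace : σ.trace = 1 := by simp [σ, trace_smul]
  have accept_σ : (Q * σ).trace.re = ((2 : ℝ) ^ p)⁻¹ * Q.trace.re := by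
    rw [Matrix.mul_smul, Matrix.mul_one, trace_smul, smul_eq_mul, hcoeff, Complex.re_ofReal_mul]
  have completeness : ∀ ρ : Matrix (Fin (2 ^ p)) (Fin (2 ^ p)) ℂ, ρ.PosSemidef → ρ.trace = 1 →
      ∀ a : ℝ, a ≤ (Q * ρ).trace.re → a * ((2 : ℝ) ^ p)⁻¹ ≤ (Q * σ).trace.re := by
    intro ρ hρ hρ_trace a ha
    rw [accept_σ, mul_comm]
    gcongr
    exact ha.trans (hQ.re_trace_mul_le_of_trace_eq_one hρ hρ_trace)
  exact ⟨completeness,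
    fun ⟨ρ, hρ, hρ_trace, ha⟩ ↦
      (inv_two_pow_succ_le_one_sub_mul_inv_two_pow p).trans (completeness ρ hρ hρ_trace _ ha),
    fun soundness ↦ soundness σ hσ hσ_trace⟩

/-- Replacing a QMA proof by the totally mixed state on `p` qubits. -/
theorem totally_mixed_proof (p : ℕ)
    (Q : Matrix (Fin (2 ^ p)) (Fin (2 ^ p)) ℂ)
    (hQ : Q.PosSemidef) (hQI : ((1 : Matrix (Fin (2 ^ p)) (Fin (2 ^ p)) ℂ) - Q).PosSemidef) :
    (∀ (ρ : Matrix (Fin (2 ^ p)) (Fin (2 ^ p)) ℂ), ρ.PosSemidef → ρ.trace = 1 →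
      ∀ a : ℝ, a ≤ (Q * ρ).trace.re →
        a * ((2 : ℝ) ^ p)⁻¹ ≤
          (Q * (((2 : ℝ) ^ p : ℂ)⁻¹ • (1 : Matrix (Fin (2 ^ p)) (Fin (2 ^ p)) ℂ))).trace.re) ∧
    ((∃ ρ : Matrix (Fin (2 ^ p)) (Fin (2 ^ p)) ℂ, ρ.PosSemidef ∧ ρ.trace = 1 ∧
        1 - ((2 : ℝ) ^ (p + 2))⁻¹ ≤ (Q * ρ).trace.re) →
      ((2 : ℝ) ^ (p + 1))⁻¹ ≤
        (Q * (((2 : ℝ) ^ p : ℂ)⁻¹ • (1 : Matrix (Fin (2 ^ p)) (Fin (2 ^ p)) ℂ))).trace.re) ∧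
    ((∀ ρ : Matrix (Fin (2 ^ p)) (Fin (2 ^ p)) ℂ, ρ.PosSemidef → ρ.trace = 1 →
        (Q * ρ).trace.re ≤ ((2 : ℝ) ^ (p + 2))⁻¹) →
      (Q * (((2 : ℝ) ^ p : ℂ)⁻¹ • (1 : Matrix (Fin (2 ^ p)) (Fin (2 ^ p)) ℂ))).trace.re ≤
        ((2 : ℝ) ^ (p + 2))⁻¹) :=
  totally_mixed_proof_general p Q hQ
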